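/- arXiv:1705.09134 — 3 statements merged into one kernel-verified Lean document; each statement's English description precedes it below -/
import Mathlib

section
/- Let E be a complex Hilbert space with a self-adjoint unitary involution ε (a ℤ/2-grading). Suppose A : E → E is a bounded skew-adjoint operator (A* = -A) such that A² + 1 is compact. Then the operator -e^{πA} - 1 is compact, and η := -e^{πA} ε satisfies: η is self-adjoint, η² = 1, and η - ε is compact, provided Aε = -εA. -/
/-!
Modulo compact operators `A² = -1`, so `A` behaves like the imaginary unit and
`e^{πA} ≡ cos π + (sin π) A = -1`; termwise, `e^{zA} - cos z - (sin z) A` is a norm-convergent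
series of compact operators, because `A^(2k) - (-1)^k` is a multiple of `A² + 1`.
Since `A` anticommutes with `ε`, conjugation by `ε` sends `e^{πA}` to `e^{-πA}`, which is both its
inverse and, `A` being skew-adjoint, its adjoint; this gives `η² = 1` and `η* = η`.
-/

open ContinuousLinearMap NormedSpace
open scoped Nat

section Anticommute

variable {𝔸 : Type*} [NormedRing 𝔸] [NormedAlgebra ℚ 𝔸] [CompleteSpace 𝔸] {a ε : 𝔸}

lemma mul_exp_eq_exp_neg_mul (h : a * ε = -(ε * a)) : ε * exp a = exp (-a) * ε :=
  SemiconjBy.exp_right (by rw [SemiconjBy, neg_mul, ← neg_eq_iff_eq_neg.mpr h])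

lemma exp_mul_mul_exp_mul_eq_one (hε : ε * ε = 1) (h : a * ε = -(ε * a)) :
    exp a * ε * (exp a * ε) = 1 := by
  rw [mul_assoc, ← mul_assoc ε, mul_exp_eq_exp_neg_mul h, mul_assoc, hε, mul_one,
    ← exp_add_of_commute (Commute.refl a).neg_right, add_neg_cancel, exp_zero]

lemma isSelfAdjoint_exp_mul_of_anticommute [StarRing 𝔸] [ContinuousStar 𝔸]
    (hε : IsSelfAdjoint ε) (ha : star a = -a) (h : a * ε = -(ε * a)) :
    IsSelfAdjoint (exp a * ε) := by
  have h' : -a * ε = -(ε * -a) := by rw [neg_mul, h, mul_neg]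
  rw [IsSelfAdjoint, star_mul, hε.star_eq, star_exp, ha, mul_exp_eq_exp_neg_mul h', neg_neg]

end Anticommute

lemma hasSum_cos_smul_one_add_sin_smul {𝔸 : Type*} [NormedRing 𝔸] [NormedAlgebra ℂ 𝔸]
    (z : ℂ) (a : 𝔸) :
    HasSum (fun n => ((n !⁻¹ : ℂ) * z ^ n) • ((-1) ^ (n / 2) * a ^ (n % 2)))
      (Complex.cos z • 1 + Complex.sin z • a) := by
  have hneg : ∀ k : ℕ, (-1 : 𝔸) ^ k = ((-1 : ℂ) ^ k) • 1 := fun k => by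
    rw [← neg_one_smul ℂ (1 : 𝔸), smul_pow, one_pow]
  refine HasSum.even_add_odd ?_ ?_
  · convert (Complex.hasSum_cos z).smul_const (1 : 𝔸) using 2 with k
    rw [Nat.mul_div_cancel_left k two_pos, Nat.mul_mod_right, pow_zero, mul_one, hneg, smul_smul]
    congr 1; ring
  · convert (Complex.hasSum_sin z).smul_const a using 2 with k
    rw [show (2 * k + 1) / 2 = k by omega, show (2 * k + 1) % 2 = 1 by omega, pow_one, hneg,
      smul_one_mul, smul_smul]
    congr 1; ring

section CompactOperator

variable {E : Type*} [NormedAddCommGroup E] [NormedSpace ℂ E] {A : E →L[ℂ] E}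

lemma isCompactOperator_mul_self_pow_sub_neg_one_pow
    (hA : IsCompactOperator (A * A + 1 : E →L[ℂ] E)) (m : ℕ) :
    IsCompactOperator ((A * A) ^ m - (-1) ^ m : E →L[ℂ] E) := by
  rw [← (Commute.neg_one_right (A * A)).geom_sum₂_mul, sub_neg_eq_add]
  exact hA.continuous_comp (ContinuousLinearMap.continuous _)

lemma isCompactOperator_pow_sub (hA : IsCompactOperator (A * A + 1 : E →L[ℂ] E)) (n : ℕ) :
    IsCompactOperator (A ^ n - (-1) ^ (n / 2) * A ^ (n % 2) : E →L[ℂ] E) := by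
  have hpow : A ^ n = (A * A) ^ (n / 2) * A ^ (n % 2) := by
    rw [← sq, ← pow_mul, ← pow_add, Nat.div_add_mod]
  rw [hpow, ← sub_mul]
  exact (isCompactOperator_mul_self_pow_sub_neg_one_pow hA _).comp_clm _

lemma isCompactOperator_exp_smul_sub [CompleteSpace E]
    (hA : IsCompactOperator (A * A + 1 : E →L[ℂ] E)) (z : ℂ) :
    IsCompactOperator (exp (z • A) - (Complex.cos z • 1 + Complex.sin z • A) : E →L[ℂ] E) := by
  have hsum := (exp_series_hasSum_exp' (𝕂 := ℂ) (z • A)).sub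
    (hasSum_cos_smul_one_add_sin_smul z A)
  rw [← hsum.tsum_eq]
  refine tsum_mem (s := compactOperator (RingHom.id ℂ) E E)
    isClosed_setOfPred_isCompactOperator fun n => ?_
  rw [smul_pow, smul_smul, ← smul_sub]
  exact (isCompactOperator_pow_sub hA n).smul _

lemma isCompactOperator_exp_pi_smul_add_one [CompleteSpace E]
    (hA : IsCompactOperator (A * A + 1 : E →L[ℂ] E)) :
    IsCompactOperator (exp ((Real.pi : ℂ) • A) + 1 : E →L[ℂ] E) := by
  simpa [← Complex.ofReal_cos, ← Complex.ofReal_sin] using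
    isCompactOperator_exp_smul_sub hA Real.pi

end CompactOperator

/-- Let `E` be a complex Hilbert space with a self-adjoint unitary involution `ε`
(a `ℤ/2`-grading), and let `A` be a bounded skew-adjoint operator (`A* = -A`) such that
`A² + 1` is compact and `Aε = -εA`.  Then `-e^{πA} - 1` is compact, and
`η := -e^{πA} ε` is self-adjoint, satisfies `η² = 1`, and `η - ε` is compact. -/
theorem stmt7 {E : Type*} [NormedAddCommGroup E] [InnerProductSpace ℂ E] [CompleteSpace E]
    (ε A : E →L[ℂ] E)
    (hεsa : adjoint ε = ε) (hε2 : ε * ε = 1)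
    (hA : adjoint A = -A)
    (hcpt : IsCompactOperator (A * A + 1 : E →L[ℂ] E))
    (hodd : A * ε = -(ε * A)) :
    IsCompactOperator
      ((-(NormedSpace.exp ((Real.pi : ℂ) • A)) - 1 : E →L[ℂ] E)) ∧
    adjoint (-(NormedSpace.exp ((Real.pi : ℂ) • A)) * ε) =
      -(NormedSpace.exp ((Real.pi : ℂ) • A)) * ε ∧
    (-(NormedSpace.exp ((Real.pi : ℂ) • A)) * ε) *
      (-(NormedSpace.exp ((Real.pi : ℂ) • A)) * ε) = 1 ∧
    IsCompactOperator
      ((-(NormedSpace.exp ((Real.pi : ℂ) • A)) * ε - ε : E →L[ℂ] E)) := by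
  let _ : NormedAlgebra ℚ (E →L[ℂ] E) := .restrictScalars ℚ ℂ _
  set a := (Real.pi : ℂ) • A
  have hcompact : IsCompactOperator (-(exp a) - 1 : E →L[ℂ] E) := by
    rw [← neg_add']
    exact (isCompactOperator_exp_pi_smul_add_one hcpt).neg
  have ha : star a = -a := by
    rw [star_smul, star_eq_adjoint, hA, Complex.star_def, Complex.conj_ofReal, smul_neg]
  have hodd' : a * ε = -(ε * a) := by rw [smul_mul_assoc, mul_smul_comm, hodd, smul_neg]
  refine ⟨hcompact, ?_, ?_, ?_⟩
  · rw [← star_eq_adjoint, neg_mul]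
    exact (isSelfAdjoint_exp_mul_of_anticommute (isSelfAdjoint_iff'.mpr hεsa) ha hodd').neg
  · rw [neg_mul, neg_mul_neg]
    exact exp_mul_mul_exp_mul_eq_one hε2 hodd'
  · rw [show -(exp a) * ε - ε = (-(exp a) - 1) * ε by rw [sub_mul, one_mul]]
    exact hcompact.comp_clm ε
end

section
/- Let X be a compact topological space, ℰ a separable Hilbert space, and (K_x)_{x∈X} a family of self-adjoint compact operators on ℰ depending norm-continuously on x. Then for every r > 0 there exists a finite-dimensional subspace ℱ ⊆ ℰ such that, with P the orthogonal projection onto ℱ, ‖K_x - P K_x‖ < r for all x ∈ X. -/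
open ContinuousLinearMap Metric Set

/-!
Since `x ↦ K x` is norm-continuous on a compact space, the operators `K x` lie within `r / 4`
of finitely many of them; each of those maps the unit ball into a totally bounded set, so all
vectors `K x v` with `‖v‖ ≤ 1` lie within `r / 2` of one finite set. As `‖y - P y‖` is the
distance from `y` to the range of the orthogonal projection `P` onto the span of that set,
`‖K x - P K x‖ ≤ r / 2`.
-/

section TotallyBounded

variable {𝕜 E F : Type*} [NontriviallyNormedField 𝕜] [SeminormedAddCommGroup E]
  [NormedSpace 𝕜 E] [NormedAddCommGroup F] [NormedSpace 𝕜 F]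

theorem IsCompact.totallyBounded_iUnion_image_closedBall {S : Set (E →L[𝕜] F)}
    (hS : IsCompact S) (hcpt : ∀ T ∈ S, IsCompactOperator T) :
    TotallyBounded (⋃ T ∈ S, T '' closedBall 0 1) := by
  refine totallyBounded_iff.2 fun ε hε => ?_
  obtain ⟨t, htS, htfin, hSt⟩ := finite_approx_of_totallyBounded hS.totallyBounded _ (half_pos hε)
  have ht : TotallyBounded (⋃ T ∈ t, T '' closedBall 0 1) :=
    (totallyBounded_biUnion htfin).2 fun T hT =>
      ((hcpt T (htS hT)).isCompact_closure_image_closedBall 1).totallyBounded.subset subset_closure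
  obtain ⟨u, hufin, htu⟩ := totallyBounded_iff.1 ht _ (half_pos hε)
  refine ⟨u, hufin, iUnion₂_subset fun T hT => ?_⟩
  rintro _ ⟨v, hv, rfl⟩
  obtain ⟨T', hT', hTT'⟩ := mem_iUnion₂.1 (hSt hT)
  obtain ⟨w, hw, hvw⟩ := mem_iUnion₂.1 (htu (mem_biUnion hT' (mem_image_of_mem _ hv)))
  have hTv : dist (T v) (T' v) < ε / 2 := by
    rw [dist_eq_norm, ← sub_apply]
    exact ((T - T').unit_le_opNorm v (mem_closedBall_zero_iff.1 hv)).trans_lt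
      (dist_eq_norm T T' ▸ hTT')
  refine mem_biUnion hw ?_
  calc dist (T v) w ≤ dist (T v) (T' v) + dist (T' v) w := dist_triangle _ _ _
    _ < ε / 2 + ε / 2 := add_lt_add hTv hvw
    _ = ε := add_halves ε

end TotallyBounded

namespace Submodule

variable {𝕜 E G : Type*} [RCLike 𝕜] [NormedAddCommGroup E] [InnerProductSpace 𝕜 E]
  [NormedAddCommGroup G] [NormedSpace 𝕜 G]

theorem norm_sub_starProjection_le_of_mem (U : Submodule 𝕜 E) [U.HasOrthogonalProjection]
    (y : E) {u : E} (hu : u ∈ U) : ‖y - U.starProjection y‖ ≤ ‖y - u‖ := by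
  rw [starProjection_minimal]
  exact ciInf_le ⟨0, forall_mem_range.2 fun _ => norm_nonneg _⟩ (⟨u, hu⟩ : U)

theorem norm_sub_starProjection_comp_le (U : Submodule 𝕜 E) [U.HasOrthogonalProjection]
    (T : G →L[𝕜] E) {ε : ℝ} (h : ∀ v ∈ closedBall (0 : G) 1, ∃ u ∈ U, ‖T v - u‖ ≤ ε) :
    ‖T - U.starProjection ∘L T‖ ≤ ε := by
  rw [← sSup_unitClosedBall_eq_norm]
  refine csSup_le ((nonempty_closedBall.2 zero_le_one).image _) ?_
  rintro _ ⟨v, hv, rfl⟩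
  obtain ⟨u, hu, hvu⟩ := h v hv
  exact (U.norm_sub_starProjection_le_of_mem (T v) hu).trans hvu

end Submodule

theorem stmt9_general {X : Type*} [TopologicalSpace X] [CompactSpace X]
    {E : Type*} [NormedAddCommGroup E] [InnerProductSpace ℂ E] [CompleteSpace E]
    (K : X → E →L[ℂ] E) (hcont : Continuous K)
    (hcpt : ∀ x, IsCompactOperator (K x))
    (r : ℝ) (hr : 0 < r) :
    ∃ F : Submodule ℂ E, FiniteDimensional ℂ F ∧
      ∃ P : E →L[ℂ] E, adjoint P = P ∧ P * P = P ∧ LinearMap.range (P : E →ₗ[ℂ] E) = F ∧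
        ∀ x, ‖K x - P * K x‖ < r := by
  obtain ⟨t, htfin, ht⟩ := totallyBounded_iff.1
    ((isCompact_range hcont).totallyBounded_iUnion_image_closedBall (forall_mem_range.2 hcpt))
    _ (half_pos hr)
  set F := Submodule.span ℂ t
  have : FiniteDimensional ℂ F := FiniteDimensional.span_of_finite ℂ htfin
  refine ⟨F, this, F.starProjection, (isSelfAdjoint_starProjection F).adjoint_eq,
    F.isIdempotentElem_starProjection, F.range_starProjection, fun x => ?_⟩
  refine (F.norm_sub_starProjection_comp_le (K x) fun v hv => ?_).trans_lt (half_lt_self hr)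
  obtain ⟨w, hw, hvw⟩ :=
    mem_iUnion₂.1 (ht (mem_biUnion (mem_range_self x) (mem_image_of_mem _ hv)))
  exact ⟨w, Submodule.subset_span hw, (mem_ball_iff_norm.1 hvw).le⟩

/-- Let `X` be a compact (Hausdorff) space, `ℰ` a separable Hilbert space, and
`(K_x)_{x ∈ X}` a norm-continuous family of self-adjoint compact operators on `ℰ`.
Then for every `r > 0` there is a finite-dimensional subspace `ℱ ⊆ ℰ` such that the
orthogonal projection `P` onto `ℱ` (characterized as the self-adjoint idempotent with
range `ℱ`) satisfies `‖K_x - P K_x‖ < r` for all `x ∈ X`. -/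
theorem stmt9 {X : Type*} [TopologicalSpace X] [CompactSpace X] [T2Space X]
    {E : Type*} [NormedAddCommGroup E] [InnerProductSpace ℂ E] [CompleteSpace E]
    [TopologicalSpace.SeparableSpace E]
    (K : X → E →L[ℂ] E) (hcont : Continuous K)
    (hsa : ∀ x, adjoint (K x) = K x)
    (hcpt : ∀ x, IsCompactOperator (K x))
    (r : ℝ) (hr : 0 < r) :
    ∃ F : Submodule ℂ E, FiniteDimensional ℂ F ∧
      ∃ P : E →L[ℂ] E, adjoint P = P ∧ P * P = P ∧ LinearMap.range (P : E →ₗ[ℂ] E) = F ∧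
        ∀ x, ‖K x - P * K x‖ < r :=
  stmt9_general K hcont hcpt r hr
end

section
/- Let X be a compact space, ℰ a separable Hilbert space with an action of the Clifford algebra Cl_{p,q} by bounded operators, and (K_x)_{x∈X} a norm-continuous family of self-adjoint compact operators. Then for any r > 0 there is a finite-dimensional Cl_{p,q}-invariant subspace ℱ ⊆ ℰ such that the orthogonal projection P onto ℱ satisfies ‖K_x - P K_x‖ < r for all x ∈ X. -/
/-!
Compactness of `X` and of each `K c` makes `⋃ x, K x '' closedBall 0 1` totally bounded, so a
finite set `s` approximates it within `r / 2`. Adding the generators one at a time,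
`M ↦ M + γ j M` keeps a finite-dimensional space of operators containing `1` stable under left
multiplication by the `γ i`, because `γ j` squares to a scalar and anticommutes with the others.
Applying this space to `span s` gives a finite-dimensional invariant `F ⊇ s`, and since the
orthogonal projection onto `F` is the best approximation from `F`, `‖K x - P K x‖ ≤ r / 2`.
-/

open ContinuousLinearMap

theorem Submodule.exists_fg_one_mem_mul_mem_of_anticomm {R A ι : Type*} [CommRing R] [Ring A]
    [Algebra R A] (a : ι → A) (hanti : ∀ i j, i ≠ j → a i * a j = -(a j * a i))
    (hsq : ∀ i, ∃ c : R, a i * a i = algebraMap R A c) (s : Finset ι) :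
    ∃ M : Submodule R A, M.FG ∧ (1 : A) ∈ M ∧ ∀ i ∈ s, ∀ m ∈ M, a i * m ∈ M := by
  classical
  induction s using Finset.induction_on with
  | empty =>
    exact ⟨R ∙ 1, Submodule.fg_span_singleton 1, Submodule.mem_span_singleton_self 1, by simp⟩
  | insert j s hj ih =>
    obtain ⟨M, hMfg, hM1, hMmul⟩ := ih
    refine ⟨M ⊔ M.map (LinearMap.mulLeft R (a j)), hMfg.sup (hMfg.map _),
      Submodule.mem_sup_left hM1, ?_⟩
    intro i hi m hm
    obtain ⟨x, hx, _, ⟨y, hy, rfl⟩, rfl⟩ := Submodule.mem_sup.mp hm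
    simp only [LinearMap.mulLeft_apply, mul_add]
    rcases Finset.mem_insert.mp hi with rfl | hi
    · obtain ⟨c, hc⟩ := hsq i
      rw [← mul_assoc, hc, ← Algebra.smul_def, add_comm]
      exact Submodule.add_mem_sup (M.smul_mem c hy) ⟨x, hx, rfl⟩
    · have hij : i ≠ j := fun h => hj (h ▸ hi)
      rw [← mul_assoc, hanti i j hij, neg_mul, mul_assoc, ← mul_neg]
      exact Submodule.add_mem_sup (hMmul i hi x hx) ⟨_, M.neg_mem (hMmul i hi y hy), rfl⟩

theorem exists_finiteDimensional_invariant_superset {𝕜 E ι : Type*}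
    [NontriviallyNormedField 𝕜] [NormedAddCommGroup E] [NormedSpace 𝕜 E] [Fintype ι]
    (γ : ι → E →L[𝕜] E) (hanti : ∀ i j, i ≠ j → γ i * γ j = -(γ j * γ i))
    (hsq : ∀ i, ∃ c : 𝕜, γ i * γ i = algebraMap 𝕜 (E →L[𝕜] E) c) {s : Set E} (hs : s.Finite) :
    ∃ F : Submodule 𝕜 E, FiniteDimensional 𝕜 F ∧ s ⊆ F ∧ ∀ i, ∀ v ∈ F, γ i v ∈ F := by
  obtain ⟨M, hMfg, hM1, hMmul⟩ :=
    Submodule.exists_fg_one_mem_mul_mem_of_anticomm γ hanti hsq Finset.univ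
  let F := Submodule.map₂ (coeLM 𝕜) M (Submodule.span 𝕜 s)
  refine ⟨F, Module.Finite.iff_fg.mpr (hMfg.map₂ _ (Submodule.fg_span hs)), ?_, ?_⟩
  · intro v hv
    simpa using Submodule.apply_mem_map₂ (coeLM 𝕜) hM1 (Submodule.subset_span hv)
  · intro i v hv
    refine (Submodule.map₂_le.mpr fun T hT u hu => ?_ : F ≤ F.comap (γ i).toLinearMap) hv
    exact (Submodule.apply_mem_map₂ (coeLM 𝕜) (hMmul i (Finset.mem_univ i) T hT) hu :)

theorem totallyBounded_iUnion_image_closedBall {X 𝕜 E : Type*} [TopologicalSpace X]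
    [CompactSpace X] [NontriviallyNormedField 𝕜] [NormedAddCommGroup E] [NormedSpace 𝕜 E]
    (K : X → E →L[𝕜] E) (hcont : Continuous K) (hcpt : ∀ x, IsCompactOperator (K x)) :
    TotallyBounded (⋃ x, K x '' Metric.closedBall 0 1) := by
  refine Metric.totallyBounded_iff.mpr fun ε hε => ?_
  obtain ⟨t, ht⟩ := isCompact_univ.elim_finite_subcover
    (fun c => K ⁻¹' Metric.ball (K c) (ε / 2)) (fun c => Metric.isOpen_ball.preimage hcont)
    (fun x _ => Set.mem_iUnion.mpr ⟨x, Metric.mem_ball_self (half_pos hε)⟩)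
  have hnet (c : X) : ∃ S : Set E, S.Finite ∧
      K c '' Metric.closedBall 0 1 ⊆ ⋃ y ∈ S, Metric.ball y (ε / 2) :=
    Metric.totallyBounded_iff.mp (.subset subset_closure
      ((hcpt c).isCompact_closure_image_closedBall 1).totallyBounded) (ε / 2) (half_pos hε)
  choose S hSfin hS using hnet
  refine ⟨⋃ c ∈ t, S c, t.finite_toSet.biUnion fun c _ => hSfin c, ?_⟩
  rintro _ ⟨_, ⟨x, rfl⟩, v, hv, rfl⟩
  obtain ⟨c, hct, hxc⟩ := Set.mem_iUnion₂.mp (ht (Set.mem_univ x))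
  obtain ⟨y, hyS, hy⟩ := Set.mem_iUnion₂.mp (hS c ⟨v, hv, rfl⟩)
  refine Set.mem_iUnion₂.mpr ⟨y, Set.mem_biUnion hct hyS, ?_⟩
  have hv1 : ‖v‖ ≤ 1 := by simpa using hv
  calc dist (K x v) y ≤ dist (K x v) (K c v) + dist (K c v) y := dist_triangle _ _ _
    _ < ε / 2 + ε / 2 := by
      gcongr
      calc dist (K x v) (K c v) = ‖(K x - K c) v‖ := by rw [dist_eq_norm, sub_apply]
        _ ≤ ‖K x - K c‖ * ‖v‖ := le_opNorm _ _
        _ ≤ ‖K x - K c‖ := mul_le_of_le_one_right (norm_nonneg _) hv1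
        _ < ε / 2 := by rw [← dist_eq_norm]; exact hxc
      exact hy
    _ = ε := add_halves ε

theorem Submodule.norm_sub_starProjection_mul_le {𝕜 E : Type*} [RCLike 𝕜]
    [NormedAddCommGroup E] [InnerProductSpace 𝕜 E] (F : Submodule 𝕜 E)
    [F.HasOrthogonalProjection] (T : E →L[𝕜] E) {ε : ℝ} (hε : 0 ≤ ε)
    (hT : ∀ v, ‖v‖ ≤ 1 → ∃ y ∈ F, ‖T v - y‖ ≤ ε) :
    ‖T - F.starProjection * T‖ ≤ ε := by
  refine opNorm_le_of_unit_norm hε fun v hv => ?_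
  obtain ⟨y, hyF, hy⟩ := hT v hv.le
  calc ‖(T - F.starProjection * T) v‖ = ‖T v - F.starProjection (T v)‖ := rfl
    _ = ⨅ x : F, ‖T v - x‖ := F.starProjection_minimal (T v)
    _ ≤ ‖T v - y‖ := ciInf_le ⟨0, Set.forall_mem_range.mpr fun _ => norm_nonneg _⟩ (⟨y, hyF⟩ : F)
    _ ≤ ε := hy

theorem stmt10_general {X : Type*} [TopologicalSpace X] [CompactSpace X]
    {E : Type*} [NormedAddCommGroup E] [InnerProductSpace ℂ E] [CompleteSpace E]
    (p q : ℕ) (γ : Fin (p + q) → E →L[ℂ] E)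
    (hγa : ∀ i j, i ≠ j → γ i * γ j = -(γ j * γ i))
    (hγs : ∀ i : Fin (p + q), γ i * γ i = if (i : ℕ) < p then -1 else 1)
    (K : X → E →L[ℂ] E) (hcont : Continuous K)
    (hcpt : ∀ x, IsCompactOperator (K x))
    (r : ℝ) (hr : 0 < r) :
    ∃ F : Submodule ℂ E, FiniteDimensional ℂ F ∧
      (∀ i, ∀ v ∈ F, γ i v ∈ F) ∧
      ∃ P : E →L[ℂ] E, adjoint P = P ∧ P * P = P ∧ LinearMap.range (P : E →ₗ[ℂ] E) = F ∧
        ∀ x, ‖K x - P * K x‖ < r := by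
  obtain ⟨s, hs, hKs⟩ := Metric.totallyBounded_iff.mp
    (totallyBounded_iUnion_image_closedBall K hcont hcpt) (r / 2) (half_pos hr)
  have hγsq (i : Fin (p + q)) : ∃ c : ℂ, γ i * γ i = algebraMap ℂ (E →L[ℂ] E) c :=
    ⟨if (i : ℕ) < p then -1 else 1, by rw [hγs]; split_ifs <;> simp⟩
  obtain ⟨F, hF, hsF, hγF⟩ := exists_finiteDimensional_invariant_superset γ hγa hγsq hs
  have : CompleteSpace F := FiniteDimensional.complete ℂ F
  refine ⟨F, hF, hγF, F.starProjection, (isSelfAdjoint_starProjection F).adjoint_eq,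
    F.isIdempotentElem_starProjection.eq, F.range_starProjection, fun x => ?_⟩
  refine (F.norm_sub_starProjection_mul_le (K x) (half_pos hr).le fun v hv => ?_).trans_lt
    (half_lt_self hr)
  obtain ⟨y, hys, hy⟩ :=
    Set.mem_iUnion₂.mp (hKs (Set.mem_iUnion.mpr ⟨x, v, by simpa using hv, rfl⟩))
  exact ⟨y, hsF hys, (mem_ball_iff_norm.mp hy).le⟩

/-- Equivariant finite-dimensional approximation: let `ℰ` be a separable Hilbert space
carrying an action of the Clifford algebra `Cl_{p,q}` by unitary operators `γ i`
(`γᵢγⱼ = -γⱼγᵢ` for `i ≠ j`, `γᵢ² = -1` for `i < p` and `γᵢ² = +1` for `i ≥ p`), let `X`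
be a compact (Hausdorff) space and `(K_x)_{x ∈ X}` a norm-continuous family of self-adjoint
compact operators.  Then for every `r > 0` there is a finite-dimensional `Cl_{p,q}`-invariant
subspace `ℱ ⊆ ℰ` such that the orthogonal projection `P` onto `ℱ` satisfies
`‖K_x - P K_x‖ < r` for all `x ∈ X`. -/
theorem stmt10 {X : Type*} [TopologicalSpace X] [CompactSpace X] [T2Space X]
    {E : Type*} [NormedAddCommGroup E] [InnerProductSpace ℂ E] [CompleteSpace E]
    [TopologicalSpace.SeparableSpace E]
    (p q : ℕ) (γ : Fin (p + q) → E →L[ℂ] E)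
    (hγu : ∀ i, adjoint (γ i) * γ i = 1 ∧ γ i * adjoint (γ i) = 1)
    (hγa : ∀ i j, i ≠ j → γ i * γ j = -(γ j * γ i))
    (hγs : ∀ i : Fin (p + q), γ i * γ i = if (i : ℕ) < p then -1 else 1)
    (K : X → E →L[ℂ] E) (hcont : Continuous K)
    (hsa : ∀ x, adjoint (K x) = K x)
    (hcpt : ∀ x, IsCompactOperator (K x))
    (r : ℝ) (hr : 0 < r) :
    ∃ F : Submodule ℂ E, FiniteDimensional ℂ F ∧
      (∀ i, ∀ v ∈ F, γ i v ∈ F) ∧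
      ∃ P : E →L[ℂ] E, adjoint P = P ∧ P * P = P ∧ LinearMap.range (P : E →ₗ[ℂ] E) = F ∧
        ∀ x, ‖K x - P * K x‖ < r :=
  stmt10_general p q γ hγa hγs K hcont hcpt r hr
end
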